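/- Let p ∈ S^{2n+1} ⊂ ℂ^{n+1}, v ∈ T_p S^{2n+1}, γ_R(t) = p cos(‖v‖t) + (v/‖v‖) sin(‖v‖t), c = ⟨v, i·p⟩, and γ(t) = e^{-ict} γ_R(t). Then ‖γ̇(t)‖² + c² = ‖v‖² for all t; in particular the speed of γ is constant. -/

import Mathlib

/-!
Factoring out the phase gives `γ̇ = e^{-ict} (γ̇_R - i c γ_R)`. The curve `γ_R` is a great
circle with `‖γ_R‖ = 1` and `‖γ̇_R‖ = ‖v‖`, and `(x, y) ↦ Re ⟨x, i y⟩` is an antisymmetric form,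
so it is invariant under the rotation carrying `(p, v)` to `(γ_R, γ̇_R)`:
`Re ⟨γ̇_R, i γ_R⟩ = Re ⟨v, i p⟩ = c`. Hence `‖γ̇‖² = ‖v‖² - 2c² + c²`.
-/

open RCLike

open scoped InnerProductSpace

section GreatCircle

variable (𝕜 : Type*) {E : Type*} [RCLike 𝕜] [NormedAddCommGroup E] [InnerProductSpace 𝕜 E]

-- For `v = 0` the convention `x / 0 = 0` makes this the constant curve at `p`.
noncomputable def greatCircle (p v : E) (t : ℝ) : E :=
  (Real.cos (‖v‖ * t) : 𝕜) • p + ((Real.sin (‖v‖ * t) / ‖v‖ : ℝ) : 𝕜) • v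

-- For `v = 0` the convention `x / 0 = 0` makes this the constant curve at `p`.
noncomputable def greatCircleVelocity (p v : E) (t : ℝ) : E :=
  ((-(‖v‖ * Real.sin (‖v‖ * t)) : ℝ) : 𝕜) • p + (Real.cos (‖v‖ * t) : 𝕜) • v

variable {𝕜} {p v : E}

theorem norm_ofReal_smul_add_ofReal_smul_sq (hp : ‖p‖ = 1) (hvp : re ⟪v, p⟫_𝕜 = 0) (a b : ℝ) :
    ‖(a : 𝕜) • p + (b : 𝕜) • v‖ ^ 2 = a ^ 2 + b ^ 2 * ‖v‖ ^ 2 := by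
  have hpv : re ⟪p, v⟫_𝕜 = 0 := by rw [inner_re_symm, hvp]
  rw [norm_add_sq (𝕜 := 𝕜), inner_smul_left, inner_smul_right, norm_smul, norm_smul]
  simp [hp, hpv, mul_pow]

theorem norm_greatCircle_sq (hp : ‖p‖ = 1) (hvp : re ⟪v, p⟫_𝕜 = 0) (t : ℝ) :
    ‖greatCircle 𝕜 p v t‖ ^ 2 = 1 := by
  rw [greatCircle, norm_ofReal_smul_add_ofReal_smul_sq hp hvp]
  rcases eq_or_ne v 0 with rfl | hv
  · simp
  · field_simp
    exact Real.cos_sq_add_sin_sq _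

theorem norm_greatCircleVelocity_sq (hp : ‖p‖ = 1) (hvp : re ⟪v, p⟫_𝕜 = 0) (t : ℝ) :
    ‖greatCircleVelocity 𝕜 p v t‖ ^ 2 = ‖v‖ ^ 2 := by
  rw [greatCircleVelocity, norm_ofReal_smul_add_ofReal_smul_sq hp hvp]
  linear_combination ‖v‖ ^ 2 * Real.sin_sq_add_cos_sq (‖v‖ * t)

theorem re_inner_I_smul_antisymm (x y : E) :
    re ⟪x, (I : 𝕜) • y⟫_𝕜 = -re ⟪y, (I : 𝕜) • x⟫_𝕜 := by
  rw [inner_smul_right, inner_smul_right, ← inner_conj_symm x y]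
  simp only [mul_re, I_re, conj_re, conj_im, zero_mul, zero_sub, mul_neg, neg_neg]

theorem re_inner_ofReal_smul_add_I_smul (a b c d : ℝ) :
    re ⟪(a : 𝕜) • p + (b : 𝕜) • v, (I : 𝕜) • ((c : 𝕜) • p + (d : 𝕜) • v)⟫_𝕜 =
      (b * c - a * d) * re ⟪v, (I : 𝕜) • p⟫_𝕜 := by
  have hp : re ⟪p, (I : 𝕜) • p⟫_𝕜 = 0 := real_inner_I_smul_self 𝕜 p
  have hv : re ⟪v, (I : 𝕜) • v⟫_𝕜 = 0 := real_inner_I_smul_self 𝕜 v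
  rw [smul_add, smul_comm (I : 𝕜) (c : 𝕜), smul_comm (I : 𝕜) (d : 𝕜)]
  simp only [inner_add_left, inner_add_right, inner_smul_real_left, inner_smul_real_right, map_add,
    smul_re, hp, hv, re_inner_I_smul_antisymm p v]
  ring

theorem re_inner_greatCircleVelocity_I_smul (t : ℝ) :
    re ⟪greatCircleVelocity 𝕜 p v t, (I : 𝕜) • greatCircle 𝕜 p v t⟫_𝕜 =
      re ⟪v, (I : 𝕜) • p⟫_𝕜 := by
  rw [greatCircleVelocity, greatCircle, re_inner_ofReal_smul_add_I_smul]
  rcases eq_or_ne v 0 with rfl | hv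
  · simp
  · field_simp
    rw [sub_neg_eq_add, Real.cos_sq_add_sin_sq, one_mul]

theorem hasDerivAt_greatCircle [NormedSpace ℝ E] [IsScalarTower ℝ 𝕜 E] (p v : E) (t : ℝ) :
    HasDerivAt (greatCircle 𝕜 p v) (greatCircleVelocity 𝕜 p v t) t := by
  have hθ : HasDerivAt (fun s : ℝ => ‖v‖ * s) ‖v‖ t := by
    simpa using (hasDerivAt_id t).const_mul ‖v‖
  have hcos := (Real.hasDerivAt_cos _).comp t hθ
  have hsin := ((Real.hasDerivAt_sin _).comp t hθ).div_const ‖v‖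
  have hcurve : greatCircle 𝕜 p v =
      fun s => Real.cos (‖v‖ * s) • p + (Real.sin (‖v‖ * s) / ‖v‖) • v := by
    funext s
    simp only [greatCircle, real_smul_eq_coe_smul (K := 𝕜)]
  have hvelocity : greatCircleVelocity 𝕜 p v t =
      (-Real.sin (‖v‖ * t) * ‖v‖) • p + (Real.cos (‖v‖ * t) * ‖v‖ / ‖v‖) • v := by
    simp only [greatCircleVelocity, ← real_smul_eq_coe_smul (K := 𝕜)]
    rcases eq_or_ne v 0 with rfl | hv
    · simp
    · rw [mul_div_cancel_right₀ _ (norm_ne_zero_iff.mpr hv), neg_mul, mul_comm (Real.sin _)]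
  rw [hcurve, hvelocity]
  exact (hcos.smul_const p).add (hsin.smul_const v)

end GreatCircle

section Phase

variable {E : Type*} [NormedAddCommGroup E] [InnerProductSpace ℂ E]

theorem HasDerivAt.exp_neg_mul_I_smul [NormedSpace ℝ E] [IsScalarTower ℝ ℂ E] {f : ℝ → E}
    {f' : E} {t : ℝ} (hf : HasDerivAt f f' t) (c : ℝ) :
    HasDerivAt (fun s : ℝ => Complex.exp (-(c * s) * Complex.I) • f s)
      (Complex.exp (-(c * t) * Complex.I) • (f' - (c * Complex.I) • f t)) t := by
  have hphase : HasDerivAt (fun s : ℝ => -((c : ℂ) * s) * Complex.I) (-(c * Complex.I)) t := by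
    simpa using (((hasDerivAt_id t).ofReal_comp).const_mul (c : ℂ)).neg.mul_const Complex.I
  refine (hphase.cexp.smul hf).congr_deriv ?_
  rw [smul_sub, smul_smul, mul_neg, neg_smul, sub_eq_add_neg, add_comm]

theorem norm_exp_neg_mul_I_smul (c t : ℝ) (w : E) :
    ‖Complex.exp (-(c * t) * Complex.I) • w‖ = ‖w‖ := by
  rw [norm_smul, ← Complex.ofReal_mul, ← Complex.ofReal_neg, Complex.norm_exp_ofReal_mul_I,
    one_mul]

theorem norm_sub_mul_I_smul_sq (w x : E) (c : ℝ) :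
    ‖w - (c * Complex.I) • x‖ ^ 2 =
      ‖w‖ ^ 2 - 2 * c * (⟪w, Complex.I • x⟫_ℂ).re + c ^ 2 * ‖x‖ ^ 2 := by
  rw [norm_sub_sq (𝕜 := ℂ), re_to_complex, mul_smul, inner_smul_right, Complex.re_ofReal_mul,
    norm_smul, norm_smul, Complex.norm_real, Complex.norm_I, Real.norm_eq_abs, mul_pow, one_mul,
    sq_abs]
  ring

end Phase

/-- Pythagoras-type relation for sub-Riemannian geodesics on `S^{2n+1}`:
`‖γ̇(t)‖² + c² = ‖v‖²` for all `t`, where `c = ⟨v, i·p⟩`; in particular the speed is constant. -/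
theorem sphere_geodesic_speed (n : ℕ) (p v : EuclideanSpace ℂ (Fin (n + 1)))
    (hp : ‖p‖ = 1) (htan : (inner ℂ v p : ℂ).re = 0)
    (c : ℝ) (hc : c = (inner ℂ v (Complex.I • p) : ℂ).re)
    (γR γ : ℝ → EuclideanSpace ℂ (Fin (n + 1)))
    (hγR : ∀ t, γR t = (Real.cos (‖v‖ * t) : ℂ) • p +
      ((Real.sin (‖v‖ * t) / ‖v‖ : ℝ) : ℂ) • v)
    (hγ : ∀ t, γ t = Complex.exp (-(c * t) * Complex.I) • γR t) :
    ∀ t, ‖deriv γ t‖ ^ 2 + c ^ 2 = ‖v‖ ^ 2 := by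
  have hγ_eq : γ = fun s : ℝ => Complex.exp (-(c * s) * Complex.I) • greatCircle ℂ p v s := by
    funext s
    rw [hγ, hγR]
    rfl
  intro t
  have hω : (⟪greatCircleVelocity ℂ p v t, Complex.I • greatCircle ℂ p v t⟫_ℂ).re = c := by
    simpa only [re_to_complex, I_to_complex, ← hc] using
      re_inner_greatCircleVelocity_I_smul (𝕜 := ℂ) (p := p) (v := v) t
  rw [hγ_eq, ((hasDerivAt_greatCircle p v t).exp_neg_mul_I_smul c).deriv, norm_exp_neg_mul_I_smul,
    norm_sub_mul_I_smul_sq, norm_greatCircleVelocity_sq hp htan, hω, norm_greatCircle_sq hp htan]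
  ring
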